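/- Let T : M_n(ℂ) → M_n(ℂ) be a positive linear map that is Lamperti (for positive semidefinite x, y with xy = 0 one has (Tx)(Ty) = 0). Then for every Hermitian matrix x, one has |T x| = T(|x|). -/

import Mathlib

/-!
A self-adjoint `a` splits as `a⁺ - a⁻` with `a⁺, a⁻ ≥ 0` and `a⁺ a⁻ = 0`. For any such orthogonal
positive pair `p, q`, `star (p - q) * (p - q) = (p + q)²`, so `|p - q| = p + q`. A positive Lamperti map sends `a⁺, a⁻`
to another orthogonal positive pair, hence `|T a| = T a⁺ + T a⁻ = T |a|`.
-/

open ComplexOrder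

/-- The absolute value `|x| = (xᴴ x)^{1/2}` of a complex matrix. -/
noncomputable def matAbs {n : ℕ} (x : Matrix (Fin n) (Fin n) ℂ) : Matrix (Fin n) (Fin n) ℂ :=
  (Matrix.posSemidef_conjTranspose_mul_self x).1.eigenvectorUnitary.1 *
    Matrix.diagonal (((↑) : ℝ → ℂ) ∘ (Real.sqrt ·) ∘ (Matrix.posSemidef_conjTranspose_mul_self x).1.eigenvalues) *
    (star (Matrix.posSemidef_conjTranspose_mul_self x).1.eigenvectorUnitary : Matrix (Fin n) (Fin n) ℂ)

def IsLamperti {A B : Type*} [Mul A] [Zero A] [LE A] [Mul B] [Zero B] (T : A → B) : Prop :=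
  ∀ a b, 0 ≤ a → 0 ≤ b → a * b = 0 → T a * T b = 0

section Lamperti

variable {A B : Type*}
  [NonUnitalRing A] [StarRing A] [TopologicalSpace A]
  [Module ℝ A] [SMulCommClass ℝ A A] [IsScalarTower ℝ A A]
  [NonUnitalContinuousFunctionalCalculus ℝ A IsSelfAdjoint]
  [PartialOrder A] [StarOrderedRing A] [NonnegSpectrumClass ℝ A]
  [IsSemitopologicalRing A] [T2Space A]
  [NonUnitalRing B] [StarRing B] [TopologicalSpace B]
  [Module ℝ B] [SMulCommClass ℝ B B] [IsScalarTower ℝ B B]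
  [NonUnitalContinuousFunctionalCalculus ℝ B IsSelfAdjoint]
  [PartialOrder B] [StarOrderedRing B] [NonnegSpectrumClass ℝ B]
  [IsSemitopologicalRing B] [T2Space B]

lemma CFC.abs_sub_of_mul_eq_zero {a b : A} (ha : 0 ≤ a) (hb : 0 ≤ b) (hab : a * b = 0) :
    CFC.abs (a - b) = a + b := by
  have hba : b * a = 0 := by
    simpa only [star_mul, ha.star_eq, hb.star_eq, star_zero] using congrArg star hab
  have hsq : star (a - b) * (a - b) = (a + b) * (a + b) := by
    simp only [star_sub, ha.star_eq, hb.star_eq, sub_mul, mul_sub, add_mul, mul_add, hab, hba]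
    abel
  rw [CFC.abs, hsq, CFC.sqrt_mul_self _ (add_nonneg ha hb)]

lemma IsLamperti.abs_map {T : A →+ B} (hT : IsLamperti T) (hTpos : ∀ a, 0 ≤ a → 0 ≤ T a)
    {a : A} (ha : IsSelfAdjoint a) : CFC.abs (T a) = T (CFC.abs a) := by
  have hpos := CFC.posPart_nonneg a
  have hneg := CFC.negPart_nonneg a
  have horth := CFC.posPart_mul_negPart a
  rw [← CFC.posPart_sub_negPart a ha, map_sub,
    CFC.abs_sub_of_mul_eq_zero hpos hneg horth,
    CFC.abs_sub_of_mul_eq_zero (hTpos _ hpos) (hTpos _ hneg) (hT _ _ hpos hneg horth), map_add]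

end Lamperti

open scoped MatrixOrder

lemma matAbs_eq_cfcAbs {n : ℕ} (x : Matrix (Fin n) (Fin n) ℂ) : matAbs x = CFC.abs x := by
  have hx := Matrix.posSemidef_conjTranspose_mul_self x
  rw [CFC.abs, Matrix.star_eq_conjTranspose, CFC.sqrt_eq_real_sqrt _ hx.nonneg, cfcₙ_eq_cfc,
    hx.1.cfc_eq]
  rfl

/-- If `T` is a positive Lamperti map on `Mₙ(ℂ)`, then `|T x| = T |x|` for every
Hermitian matrix `x`. -/
theorem abs_map_eq_map_abs_of_lamperti {n : ℕ}
    (T : Matrix (Fin n) (Fin n) ℂ →ₗ[ℂ] Matrix (Fin n) (Fin n) ℂ)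
    (hTpos : ∀ x : Matrix (Fin n) (Fin n) ℂ, x.PosSemidef → (T x).PosSemidef)
    (hTlam : ∀ x y : Matrix (Fin n) (Fin n) ℂ,
      x.PosSemidef → y.PosSemidef → x * y = 0 → T x * T y = 0)
    (x : Matrix (Fin n) (Fin n) ℂ) (hx : x.IsHermitian) :
    matAbs (T x) = T (matAbs x) := by
  simp only [← Matrix.nonneg_iff_posSemidef] at hTpos hTlam
  rw [matAbs_eq_cfcAbs, matAbs_eq_cfcAbs]
  exact IsLamperti.abs_map (T := T.toAddMonoidHom) hTlam hTpos hx
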